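/- Let ℍ∞ be the subset of positive times t where the rescaled chronological height converges; under Conditions T-C and C1–C5 of the paper, for the limiting time-change φ∞(t) = t/(2β*) with β* = E[V*∞], the rescaled inverse φ_p(t) = p^{−1} min{j ≥ 0 : 2𝒱(j−1) − ℍ(j) ≥ pt} converges in probability to φ∞(t) for every t ≥ 0, provided 𝒱([ps])/p ⇒ β*s for every s ≥ 0, pε_p → ∞, and (ε_p ℍ([ps]))_p is tight for every s ≥ 0. -/

import Mathlib

/-! Write `m = t / (2β*)`. By the law of large numbers `𝒱([ps]) ≈ β* p s`, and tightness of
`ε_p ℍ([ps])` together with `p ε_p → ∞` makes `ℍ([ps]) = o(p)` in probability. So with high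
probability `K_j ≥ pt` at `j = [p(m + δ)]`, whence `φ(pt) ≤ p(m + δ)`; and since `ℍ ≥ 0`,
`K_j ≤ 2𝒱([p(m - δ)]) < pt` for every `j ≤ p(m - δ)`, whence `φ(pt) > p(m - δ)`. -/

open MeasureTheory Filter
open scoped Classical

noncomputable section

/-- `𝒱(j−1) = V_0 + ⋯ + V_{j-1}` and `K_j = 2𝒱(j−1) − ℍ(j)`; the inverse time change is
`φ(t) = min{j ≥ 0 : K_j ≥ t}`. -/
def varphi {Ω' : Type*} (V : ℕ → Ω' → ℝ) (H : ℕ → Ω' → ℝ) (t : ℝ) (ω : Ω') : ℕ :=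
  sInf {j : ℕ | t ≤ 2 * ∑ k ∈ Finset.range j, V k ω - H j ω}

open Finset

lemma Nat.floor_add_one_le_floor {R : Type*} [Semiring R] [LinearOrder R] [FloorSemiring R]
    [IsStrictOrderedRing R] {x y : R} (hx : 0 ≤ x) (hxy : x + 1 ≤ y) :
    ⌊x⌋₊ + 1 ≤ ⌊y⌋₊ :=
  Nat.floor_add_one hx ▸ Nat.floor_le_floor hxy

section InverseTimeChange

variable {Ω' : Type*} {V H : ℕ → Ω' → ℝ} {ω : Ω'}

lemma varphi_le_of_le {t : ℝ} {j : ℕ} (h : t ≤ 2 * ∑ k ∈ range j, V k ω - H j ω) :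
    varphi V H t ω ≤ j :=
  Nat.sInf_le h

/-- The witness `hj` excludes the junk value `sInf ∅ = 0`. -/
lemma le_two_mul_sum_of_varphi_le (hV : ∀ k, 0 ≤ V k ω) (hH : ∀ j, 0 ≤ H j ω) {t : ℝ}
    {j n : ℕ} (hj : t ≤ 2 * ∑ k ∈ range j, V k ω - H j ω) (hn : varphi V H t ω ≤ n) :
    t ≤ 2 * ∑ k ∈ range n, V k ω := by
  have hmem : t ≤ 2 * ∑ k ∈ range (varphi V H t ω), V k ω - H (varphi V H t ω) ω :=
    Nat.sInf_mem (s := {j : ℕ | t ≤ 2 * ∑ k ∈ range j, V k ω - H j ω}) ⟨j, hj⟩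
  have hsum : ∑ k ∈ range (varphi V H t ω), V k ω ≤ ∑ k ∈ range n, V k ω :=
    sum_le_sum_of_subset_of_nonneg (range_subset_range.2 hn) fun k _ _ => hV k
  linarith [hH (varphi V H t ω)]

variable {β m δ p : ℝ}

lemma le_two_mul_sum_sub_at_floor (hV : ∀ k, 0 ≤ V k ω) (hβ : 0 < β) (hm : 0 ≤ m)
    (hδ : 0 < δ) (hpδ : 4 ≤ p * δ)
    (hA : |(∑ k ∈ range (⌊p * (m + δ / 2)⌋₊ + 1), V k ω) / p - β * (m + δ / 2)| ≤ β * δ / 4)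
    (hB : H ⌊p * (m + δ)⌋₊ ω ≤ β * δ / 4 * p) :
    p * (2 * β * m) ≤ 2 * ∑ k ∈ range ⌊p * (m + δ)⌋₊, V k ω - H ⌊p * (m + δ)⌋₊ ω := by
  have hp : 0 < p := pos_of_mul_pos_left (by linarith) hδ.le
  have hfloor : ⌊p * (m + δ / 2)⌋₊ + 1 ≤ ⌊p * (m + δ)⌋₊ :=
    Nat.floor_add_one_le_floor (by positivity) (by nlinarith)
  have hsum : ∑ k ∈ range (⌊p * (m + δ / 2)⌋₊ + 1), V k ω ≤ ∑ k ∈ range ⌊p * (m + δ)⌋₊, V k ω :=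
    sum_le_sum_of_subset_of_nonneg (range_subset_range.2 hfloor) fun k _ _ => hV k
  have hlow : β * (m + δ / 4) * p ≤ ∑ k ∈ range (⌊p * (m + δ / 2)⌋₊ + 1), V k ω := by
    rw [← le_div_iff₀ hp]
    linarith [(abs_le.1 hA).1]
  linarith [mul_nonneg hβ.le (by linarith : (0 : ℝ) ≤ p * δ)]

lemma abs_varphi_div_sub_le (hV : ∀ k, 0 ≤ V k ω) (hH : ∀ j, 0 ≤ H j ω) (hβ : 0 < β)
    (hm : 0 ≤ m) (hδ : 0 < δ) (hpδ : 4 ≤ p * δ)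
    (hA : |(∑ k ∈ range (⌊p * (m + δ / 2)⌋₊ + 1), V k ω) / p - β * (m + δ / 2)| ≤ β * δ / 4)
    (hB : H ⌊p * (m + δ)⌋₊ ω ≤ β * δ / 4 * p)
    (hC : |(∑ k ∈ range (⌊p * max (m - δ) 0⌋₊ + 1), V k ω) / p - β * max (m - δ) 0|
      ≤ β * δ / 2) :
    |(varphi V H (p * (2 * β * m)) ω : ℝ) / p - m| ≤ δ := by
  have hp : 0 < p := pos_of_mul_pos_left (by linarith) hδ.le
  have hK := le_two_mul_sum_sub_at_floor hV hβ hm hδ hpδ hA hB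
  have hφ : (varphi V H (p * (2 * β * m)) ω : ℝ) ≤ p * (m + δ) :=
    (Nat.cast_le.2 (varphi_le_of_le hK)).trans (Nat.floor_le (by positivity))
  refine abs_sub_le_iff.2 ⟨by rw [sub_le_iff_le_add, div_le_iff₀ hp]; linarith, ?_⟩
  by_contra! hlt
  have hφ_lt : (varphi V H (p * (2 * β * m)) ω : ℝ) < p * (m - δ) := by
    rw [← div_lt_iff₀' hp]; linarith
  have hmδ : max (m - δ) 0 = m - δ :=
    max_eq_left (pos_of_mul_pos_right ((Nat.cast_nonneg _).trans_lt hφ_lt) hp.le).le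
  rw [hmδ] at hC
  have hup : ∑ k ∈ range (⌊p * (m - δ)⌋₊ + 1), V k ω ≤ β * (m - δ / 2) * p := by
    rw [← div_le_iff₀ hp]
    linarith [(abs_le.1 hC).2]
  have := le_two_mul_sum_of_varphi_le hV hH hK
    ((Nat.le_floor hφ_lt.le).trans (Nat.le_succ _))
  linarith [mul_pos hβ (by linarith : (0 : ℝ) < p * δ)]

end InverseTimeChange

section ConvergenceInProbability

variable {Ω : Type*} [MeasurableSpace Ω]

lemma tendsto_measure_toReal_of_subset_union {ι : Type*} {l : Filter ι} {μ : ι → Measure Ω}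
    [∀ i, IsFiniteMeasure (μ i)] {A B C D : ι → Set Ω}
    (hA : Tendsto (fun i => (μ i (A i)).toReal) l (nhds 0))
    (hB : Tendsto (fun i => (μ i (B i)).toReal) l (nhds 0))
    (hC : Tendsto (fun i => (μ i (C i)).toReal) l (nhds 0))
    (hD : ∀ᶠ i in l, D i ⊆ A i ∪ B i ∪ C i) :
    Tendsto (fun i => (μ i (D i)).toReal) l (nhds 0) := by
  refine tendsto_of_tendsto_of_tendsto_of_le_of_le' tendsto_const_nhds
    (by simpa using (hA.add hB).add hC) (Eventually.of_forall fun _ => ENNReal.toReal_nonneg) ?_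
  filter_upwards [hD] with i hi
  calc (μ i).real (D i) ≤ (μ i).real (A i ∪ B i ∪ C i) := measureReal_mono hi
    _ ≤ (μ i).real (A i ∪ B i) + (μ i).real (C i) := measureReal_union_le _ _
    _ ≤ (μ i).real (A i) + (μ i).real (B i) + (μ i).real (C i) := by
      gcongr; exact measureReal_union_le _ _

lemma tendsto_measure_toReal_mul_lt_of_tight {μ : ℕ → Measure Ω} [∀ p, IsFiniteMeasure (μ p)]
    {Y : ℕ → Ω → ℝ} {ε : ℕ → ℝ} (hpε : Tendsto (fun p : ℕ => (p : ℝ) * ε p) atTop atTop)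
    (htight : ∀ ρ : ℝ, 0 < ρ → ∃ M : ℝ, ∀ p, ((μ p) {ω | M < ε p * Y p ω}).toReal ≤ ρ)
    {δ : ℝ} (hδ : 0 < δ) :
    Tendsto (fun p : ℕ => ((μ p) {ω | δ * p < Y p ω}).toReal) atTop (nhds 0) := by
  refine tendsto_order.2 ⟨fun ρ hρ => Eventually.of_forall fun _ =>
    hρ.trans_le ENNReal.toReal_nonneg, fun ρ hρ => ?_⟩
  obtain ⟨M, hM⟩ := htight (ρ / 2) (by linarith)
  filter_upwards [hpε.eventually_gt_atTop 0, hpε.eventually_ge_atTop (|M| / δ)]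
    with p hpos hpM
  have hε : 0 < ε p := pos_of_mul_pos_right hpos (Nat.cast_nonneg p)
  have hsub : {ω | δ * p < Y p ω} ⊆ {ω | M < ε p * Y p ω} := fun ω (hω : δ * p < Y p ω) => by
    have : |M| ≤ ε p * (δ * p) := by rw [div_le_iff₀ hδ] at hpM; linarith
    show M < ε p * Y p ω
    nlinarith [le_abs_self M]
  calc (μ p).real {ω | δ * p < Y p ω} ≤ (μ p).real {ω | M < ε p * Y p ω} := measureReal_mono hsub
    _ ≤ ρ / 2 := hM p
    _ < ρ := by linarith

end ConvergenceInProbability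

theorem stmt19 {Ω' : Type*} [MeasurableSpace Ω'] (μ : ℕ → Measure Ω')
    [∀ p, IsProbabilityMeasure (μ p)]
    (V : ℕ → Ω' → ℝ) (H : ℕ → Ω' → ℝ) (ε : ℕ → ℝ) (βs : ℝ)
    (hβ : 0 < βs)
    -- edge lengths are positive, heights are nonnegative
    (hV : ∀ k ω, 0 < V k ω) (hH : ∀ j ω, 0 ≤ H j ω)
    -- triangular weak law of large numbers: `𝒱([ps])/p ⇒ β* s` for every `s ≥ 0`
    (hLLN : ∀ s : ℝ, 0 ≤ s → ∀ δ : ℝ, 0 < δ →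
      Tendsto (fun p : ℕ =>
          ((μ p) {ω | δ <
            |(∑ k ∈ Finset.range (⌊(p : ℝ) * s⌋₊ + 1), V k ω) / (p : ℝ) - βs * s|}).toReal)
        atTop (nhds 0))
    -- `p ε_p → ∞`
    (hpε : Tendsto (fun p : ℕ => (p : ℝ) * ε p) atTop atTop)
    -- tightness of `(ε_p ℍ([ps]))_p` for every `s ≥ 0`
    (htight : ∀ s : ℝ, 0 ≤ s → ∀ δ : ℝ, 0 < δ → ∃ M : ℝ, ∀ p : ℕ,
      ((μ p) {ω | M < ε p * H (⌊(p : ℝ) * s⌋₊) ω}).toReal ≤ δ) :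
    -- conclusion: `φ_p(t) = φ(pt)/p → φ_∞(t) = t/(2β*)` in probability
    ∀ t : ℝ, 0 ≤ t → ∀ δ : ℝ, 0 < δ →
      Tendsto (fun p : ℕ =>
          ((μ p) {ω |
            δ < |((varphi V H ((p : ℝ) * t) ω : ℕ) : ℝ) / (p : ℝ) - t / (2 * βs)|}).toReal)
        atTop (nhds 0) := by
  intro t ht δ hδ
  obtain ⟨m, hm, rfl⟩ : ∃ m, 0 ≤ m ∧ t = 2 * βs * m :=
    ⟨t / (2 * βs), by positivity, by field_simp⟩
  simp only [mul_div_cancel_left₀ m (by positivity : 2 * βs ≠ 0)]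
  refine tendsto_measure_toReal_of_subset_union
    (hLLN (m + δ / 2) (by positivity) (βs * δ / 4) (by positivity))
    (tendsto_measure_toReal_mul_lt_of_tight hpε (htight (m + δ) (by positivity))
      (δ := βs * δ / 4) (by positivity))
    (hLLN (max (m - δ) 0) (le_max_right _ _) (βs * δ / 2) (by positivity)) ?_
  filter_upwards [eventually_ge_atTop ⌈4 / δ⌉₊] with p hp ω hω
  have hpδ : 4 ≤ (p : ℝ) * δ := by
    rw [← div_le_iff₀ hδ]; exact (Nat.ceil_le.1 hp)
  by_contra hω'
  simp only [Set.mem_union, Set.mem_ofPred_eq, not_or, not_lt] at hω'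
  obtain ⟨⟨hA, hB⟩, hC⟩ := hω'
  exact hω.not_ge (abs_varphi_div_sub_le (fun k => (hV k ω).le) (hH · ω) hβ hm hδ hpδ hA hB hC)

end
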